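/- arXiv:2112.04826 — 2 statements merged into one kernel-verified Lean document; each statement's English description precedes it below -/
import Mathlib

section
/- Every finite-dimensional real associative division algebra is isomorphic to R, C, or H. -/
/-!
Every element `x` satisfies a real polynomial of degree at most two, so after completing the
square either `x` is real or `t • (x - a)` squares to `-1`. Fix such an `i`. Two commuting square
roots of `-1` agree up to sign, so whatever commutes with `i` lies in `ℝ + ℝ i`; if that is
everything, `D ≅ ℂ`. Otherwise `v ↦ (v ± i v i) / 2` splits `D` into the parts commuting and
anticommuting with `i`, and a nonzero anticommuting `m` has `m²` commuting with both `i` and `m`,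
hence real and negative, so it rescales to `j` with `j² = -1`, `j i = -i j`. Left multiplication
by `j` swaps the two parts, so `1, i, j, i j` span and `D ≅ ℍ`.
-/

open Polynomial

theorem Polynomial.Monic.exists_dvd_sub_C_sq_sub_C {K : Type*} [Field K] [NeZero (2 : K)]
    {p : K[X]} (hp : p.Monic) (hdeg : p.natDegree ≤ 2) :
    ∃ a r : K, p ∣ (X - C a) ^ 2 - C r := by
  have hp' : p.IsMonicOfDegree p.natDegree := ⟨rfl, hp⟩
  interval_cases h : p.natDegree
  · exact ⟨0, 0, by simp [isMonicOfDegree_zero_iff.mp hp']⟩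
  · obtain ⟨c, rfl⟩ := isMonicOfDegree_one_iff.mp hp'
    exact ⟨-c, 0, by simp [sq]⟩
  · obtain ⟨b, c, rfl⟩ := isMonicOfDegree_two_iff.mp hp'
    refine ⟨-(b / 2), (b / 2) ^ 2 - c, dvd_of_eq ?_⟩
    have hb : C b = 2 * C (b / 2) := by
      rw [← C_ofNat, ← C_mul, mul_div_cancel₀ _ two_ne_zero]
    rw [hb]
    simp only [map_neg, map_sub, map_pow]
    ring

theorem IsIntegral.exists_sub_algebraMap_sq_eq {K D : Type*} [Field K] [NeZero (2 : K)] [Ring D]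
    [Algebra K D] {x : D} (hx : IsIntegral K x) (hdeg : (minpoly K x).natDegree ≤ 2) :
    ∃ a r : K, (x - algebraMap K D a) ^ 2 = algebraMap K D r := by
  obtain ⟨a, r, hdvd⟩ := (minpoly.monic hx).exists_dvd_sub_C_sq_sub_C hdeg
  refine ⟨a, r, sub_eq_zero.mp ?_⟩
  simpa using aeval_eq_zero_of_dvd_aeval_eq_zero hdvd (minpoly.aeval K x)

section Ring

variable {D : Type*} [Ring D]

theorem commute_mul_of_anticommute {i j m : D} (hj : j * i = -(i * j)) (hm : m * i = -(i * m)) :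
    Commute (j * m) i := by
  rw [Commute, SemiconjBy, mul_assoc, hm, mul_neg, ← mul_assoc, hj, neg_mul, neg_neg, mul_assoc]

variable [Algebra ℝ D]

theorem mul_eq_zero_of_commute_of_anticommute {a b : D} (hc : Commute a b)
    (ha : a * b = -(b * a)) : a * b = 0 := by
  rw [← hc.eq] at ha
  have h : (2 : ℝ) • (a * b) = 0 := by
    rw [two_smul]
    nth_rw 2 [ha]
    exact add_neg_cancel _
  simpa using h

theorem exists_eq_add_commute_anticommute {i : D} (hi : i * i = -1) (v : D) :
    ∃ p m : D, v = p + m ∧ Commute p i ∧ m * i = -(i * m) := by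
  have h : i * v * i * i = -(i * v) := by rw [mul_assoc _ i i, hi, mul_neg_one]
  have h' : i * (i * v * i) = -(v * i) := by rw [← mul_assoc, ← mul_assoc, hi, neg_one_mul, neg_mul]
  refine ⟨(2 : ℝ)⁻¹ • (v - i * v * i), (2 : ℝ)⁻¹ • (v + i * v * i), ?_, ?_, ?_⟩
  · rw [← smul_add, sub_add_add_cancel, ← two_smul ℝ, smul_smul, inv_mul_cancel₀ two_ne_zero,
      one_smul]
  · rw [Commute, SemiconjBy, smul_mul_assoc, mul_smul_comm, sub_mul, mul_sub, h, h',
      sub_neg_eq_add, sub_neg_eq_add, add_comm]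
  · rw [smul_mul_assoc, mul_smul_comm, ← smul_neg, add_mul, mul_add, h, h', neg_add, neg_neg,
      add_comm]

theorem mem_range_algebraMap_of_sq_eq [NoZeroDivisors D] {x : D} {r : ℝ} (hr : 0 ≤ r)
    (hx : x ^ 2 = algebraMap ℝ D r) : x ∈ Set.range (algebraMap ℝ D) := by
  have hs : algebraMap ℝ D √r * algebraMap ℝ D √r = x * x := by
    rw [← map_mul, Real.mul_self_sqrt hr, ← sq, hx]
  rcases (Algebra.commute_algebraMap_left √r x).mul_self_eq_mul_self_iff.mp hs with h | h
  · exact ⟨√r, h⟩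
  · exact ⟨-√r, by rw [map_neg, h, neg_neg]⟩

theorem inv_sqrt_smul_mul_self_eq_neg_one {z : D} {r : ℝ} (hr : r < 0)
    (hz : z ^ 2 = algebraMap ℝ D r) : ((√(-r))⁻¹ • z) * ((√(-r))⁻¹ • z) = -1 := by
  have hs : (√(-r))⁻¹ * (√(-r))⁻¹ * r = -1 := by
    rw [← mul_inv, Real.mul_self_sqrt (by linarith), inv_neg, neg_mul, inv_mul_cancel₀ hr.ne]
  rw [smul_mul_smul_comm, ← sq z, hz, Algebra.algebraMap_eq_smul_one, smul_smul, hs, neg_one_smul]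

theorem nonempty_algEquiv_real_of_surjective [Nontrivial D]
    (h : Function.Surjective (algebraMap ℝ D)) : Nonempty (D ≃ₐ[ℝ] ℝ) :=
  ⟨(AlgEquiv.ofBijective (Algebra.ofId ℝ D) ⟨(algebraMap ℝ D).injective, h⟩).symm⟩

end Ring

section Algebraic

variable {D : Type*} [Ring D] [IsDomain D] [Algebra ℝ D] [Algebra.IsIntegral ℝ D]

theorem mem_range_algebraMap_or_exists_smul_sub_mul_self_eq_neg_one (x : D) :
    x ∈ Set.range (algebraMap ℝ D) ∨
      ∃ a t : ℝ, (t • (x - algebraMap ℝ D a)) * (t • (x - algebraMap ℝ D a)) = -1 := by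
  have hx := Algebra.IsIntegral.isIntegral (R := ℝ) x
  obtain ⟨a, r, hr⟩ := hx.exists_sub_algebraMap_sq_eq (minpoly.irreducible hx).natDegree_le_two
  rcases le_or_gt 0 r with hr₀ | hr₀
  · obtain ⟨b, hb⟩ := mem_range_algebraMap_of_sq_eq hr₀ hr
    exact Or.inl ⟨b + a, by rw [map_add, hb, sub_add_cancel]⟩
  · exact Or.inr ⟨a, _, inv_sqrt_smul_mul_self_eq_neg_one hr₀ hr⟩

theorem exists_mul_self_eq_neg_one_of_not_surjective
    (h : ¬Function.Surjective (algebraMap ℝ D)) : ∃ i : D, i * i = -1 := by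
  obtain ⟨x, hx⟩ := not_forall.mp h
  obtain ⟨a, t, ht⟩ :=
    (mem_range_algebraMap_or_exists_smul_sub_mul_self_eq_neg_one x).resolve_left hx
  exact ⟨_, ht⟩

theorem exists_eq_algebraMap_add_smul_of_commute {i y : D} (hi : i * i = -1)
    (hy : Commute y i) : ∃ a b : ℝ, y = algebraMap ℝ D a + b • i := by
  rcases mem_range_algebraMap_or_exists_smul_sub_mul_self_eq_neg_one y with
    ⟨a, rfl⟩ | ⟨a, t, ht⟩
  · exact ⟨a, 0, by rw [zero_smul, add_zero]⟩
  have hu : Commute (t • (y - algebraMap ℝ D a)) i :=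
    (hy.sub_left (Algebra.commute_algebraMap_left a i)).smul_left t
  have ht₀ : t ≠ 0 := by
    rintro rfl
    simp at ht
  have hy_eq : y = algebraMap ℝ D a + t⁻¹ • (t • (y - algebraMap ℝ D a)) := by
    rw [inv_smul_smul₀ ht₀, add_sub_cancel]
  rcases hu.mul_self_eq_mul_self_iff.mp (ht.trans hi.symm) with h | h
  · exact ⟨a, t⁻¹, by rwa [h] at hy_eq⟩
  · exact ⟨a, -t⁻¹, by rwa [h, smul_neg, ← neg_smul] at hy_eq⟩

theorem exists_mul_self_eq_neg_one_of_anticommute {i m : D} (hi : i * i = -1) (hm₀ : m ≠ 0)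
    (hm : m * i = -(i * m)) : ∃ j : D, j * j = -1 ∧ j * i = -(i * j) := by
  have hi₀ : i ≠ 0 := by
    rintro rfl
    simp at hi
  obtain ⟨A, B, hAB⟩ :=
    exists_eq_algebraMap_add_smul_of_commute hi (commute_mul_of_anticommute hm hm)
  have hB : B = 0 := by
    have hc : Commute m (B • i) := by
      have := (Commute.refl m).mul_right (Commute.refl m)
      rw [hAB] at this
      simpa using this.sub_right (Algebra.commute_algebraMap_right A m)
    have ha : m * (B • i) = -((B • i) * m) := by rw [mul_smul_comm, smul_mul_assoc, hm, smul_neg]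
    have := mul_eq_zero_of_commute_of_anticommute hc ha
    rw [mul_smul_comm, smul_eq_zero] at this
    exact this.resolve_right (mul_ne_zero hm₀ hi₀)
  rw [hB, zero_smul, add_zero, ← sq] at hAB
  have hA : A < 0 := by
    by_contra! hA
    obtain ⟨s, rfl⟩ := mem_range_algebraMap_of_sq_eq hA hAB
    exact mul_ne_zero hm₀ hi₀
      (mul_eq_zero_of_commute_of_anticommute (Algebra.commute_algebraMap_left s i) hm)
  refine ⟨_, inv_sqrt_smul_mul_self_eq_neg_one hA hAB, ?_⟩
  rw [smul_mul_assoc, mul_smul_comm, hm, smul_neg]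

theorem nonempty_algEquiv_complex_of_forall_commute {i : D} (hi : i * i = -1)
    (h : ∀ y : D, Commute y i) : Nonempty (D ≃ₐ[ℝ] ℂ) := by
  let f := Complex.liftAux i hi
  have hsurj : Function.Surjective f := fun y => by
    obtain ⟨a, b, rfl⟩ := exists_eq_algebraMap_add_smul_of_commute hi (h y)
    exact ⟨⟨a, b⟩, Complex.liftAux_apply i hi _⟩
  exact ⟨(AlgEquiv.ofBijective f ⟨f.toRingHom.injective, hsurj⟩).symm⟩

theorem nonempty_algEquiv_quaternion_of_anticommute {i j : D} (hi : i * i = -1)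
    (hj : j * j = -1) (hji : j * i = -(i * j)) : Nonempty (D ≃ₐ[ℝ] Quaternion ℝ) := by
  let q : QuaternionAlgebra.Basis D (-1 : ℝ) 0 (-1) :=
    { i, j, k := i * j,
      i_mul_i := by rw [hi, neg_one_smul, zero_smul, add_zero]
      j_mul_j := by rw [hj, neg_one_smul]
      i_mul_j := rfl
      j_mul_i := by rw [hji, zero_smul, zero_sub] }
  let f : Quaternion ℝ →ₐ[ℝ] D := q.liftHom
  have hrange : f.range = Algebra.adjoin ℝ {i, j, i * j} := q.range_liftHom
  have hi_mem : i ∈ f.range := hrange ▸ Algebra.subset_adjoin (by simp)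
  have hj_mem : j ∈ f.range := hrange ▸ Algebra.subset_adjoin (by simp)
  have hcomm_mem : ∀ y : D, Commute y i → y ∈ f.range := fun y hy => by
    obtain ⟨a, b, rfl⟩ := exists_eq_algebraMap_add_smul_of_commute hi hy
    exact add_mem (f.range.algebraMap_mem a) (f.range.smul_mem hi_mem b)
  have hsurj : Function.Surjective f := fun v => by
    obtain ⟨p, m, rfl, hp, hm⟩ := exists_eq_add_commute_anticommute hi v
    have hm_eq : m = j * -(j * m) := by rw [mul_neg, ← mul_assoc, hj, neg_one_mul, neg_neg]
    rw [hm_eq]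
    exact add_mem (hcomm_mem p hp)
      (mul_mem hj_mem (hcomm_mem _ (commute_mul_of_anticommute hji hm).neg_left))
  exact ⟨(AlgEquiv.ofBijective f ⟨f.toRingHom.injective, hsurj⟩).symm⟩

theorem nonempty_algEquiv_real_or_complex_or_quaternion :
    Nonempty (D ≃ₐ[ℝ] ℝ) ∨ Nonempty (D ≃ₐ[ℝ] ℂ) ∨ Nonempty (D ≃ₐ[ℝ] Quaternion ℝ) := by
  by_cases hR : Function.Surjective (algebraMap ℝ D)
  · exact .inl (nonempty_algEquiv_real_of_surjective hR)
  obtain ⟨i, hi⟩ := exists_mul_self_eq_neg_one_of_not_surjective hR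
  by_cases hC : ∀ y : D, Commute y i
  · exact .inr (.inl (nonempty_algEquiv_complex_of_forall_commute hi hC))
  obtain ⟨y, hy⟩ := not_forall.mp hC
  obtain ⟨p, m, rfl, hp, hm⟩ := exists_eq_add_commute_anticommute hi y
  have hm₀ : m ≠ 0 := by
    rintro rfl
    exact hy (by rwa [add_zero])
  obtain ⟨j, hj, hji⟩ := exists_mul_self_eq_neg_one_of_anticommute hi hm₀ hm
  exact .inr (.inr (nonempty_algEquiv_quaternion_of_anticommute hi hj hji))

end Algebraic

/-- Frobenius: every finite-dimensional real associative division algebra is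
isomorphic, as an ℝ-algebra, to ℝ, ℂ, or the quaternions ℍ. -/
theorem stmt_7 (D : Type*) [Ring D] [Algebra ℝ D] [FiniteDimensional ℝ D] [Nontrivial D]
    (hdiv : ∀ x : D, x ≠ 0 → IsUnit x) :
    Nonempty (D ≃ₐ[ℝ] ℝ) ∨ Nonempty (D ≃ₐ[ℝ] ℂ) ∨ Nonempty (D ≃ₐ[ℝ] Quaternion ℝ) := by
  let _ : DivisionRing D :=
    DivisionRing.ofIsUnitOrEqZero fun a => or_iff_not_imp_right.mpr (hdiv a)
  exact nonempty_algEquiv_real_or_complex_or_quaternion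
end

section
/- For a compact group G acting on a finite-dimensional complex inner product space V by a unitary representation, and a G-equivariant operator-valued spectral measure F (i.e., F(gA) = θ(g)F(A)θ(g)⁻¹ for all g ∈ G and Borel sets A) with trace measure μ(A) = tr F(A): the measure μ is G-invariant (μ(gA) = μ(A)), F is absolutely continuous with respect to μ, and the Radon–Nikodym density f(k) = dF/dμ takes values in the convex compact set of Hermitian nonnegative-definite operators on V with unit trace and satisfies f(gk) = θ(g)f(k)θ(g)⁻¹ for μ-almost all k. -/
/-!
Each `F A` is a positive operator, so its trace is a nonnegative real number that vanishes only
when `F A = 0`; hence `F ≪ μ`, and `μ` is invariant because the trace is invariant under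
conjugation. Since `V →L[ℂ] V` is finite-dimensional, the Radon–Nikodym theorem applied to the
coordinates of `F` gives a density `f`. Positivity, trace one and equivariance of `f` are read
off from the set integrals `∫_A f = F A`: positivity is tested against `k ↦ ⟪v, f k v⟫` for `v`
in a countable dense subset of `V`, and equivariance compares `f ∘ ρ g` with the conjugate of
`f` using that `ρ g` preserves `μ`.
-/

open MeasureTheory
open scoped ComplexOrder

namespace ContinuousLinearMap

theorem isPositive_iff_inner_eq_conj_and_re_inner_nonneg {𝕜 E : Type*} [RCLike 𝕜]
    [NormedAddCommGroup E] [InnerProductSpace 𝕜 E] (T : E →L[𝕜] E) :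
    T.IsPositive ↔ (∀ u v, inner 𝕜 u (T v) = starRingEnd 𝕜 (inner 𝕜 v (T u))) ∧
      ∀ v, 0 ≤ RCLike.re (inner 𝕜 v (T v)) := by
  refine and_congr ⟨fun h u v => ?_, fun h u v => ?_⟩ (forall_congr' fun v => ?_)
  · exact ((inner_conj_symm _ _).trans (h u v)).symm
  · exact ((h u v).trans (inner_conj_symm _ _)).symm
  · rw [reApplyInnerSelf, inner_re_symm]

theorem isPositive_iff_forall_inner_nonneg {E : Type*} [NormedAddCommGroup E]
    [InnerProductSpace ℂ E] (T : E →L[ℂ] E) :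
    T.IsPositive ↔ ∀ v, 0 ≤ inner ℂ v (T v) := by
  rw [isPositive_iff_complex]
  refine forall_congr' fun v => ?_
  rw [← inner_conj_symm v (T v), Complex.nonneg_iff, Complex.conj_re, Complex.conj_im,
    Complex.ext_iff]
  simp [and_comm, eq_comm]

end ContinuousLinearMap

theorem LinearMap.IsPositive.eq_zero_of_trace_eq_zero {𝕜 E : Type*} [RCLike 𝕜]
    [NormedAddCommGroup E] [InnerProductSpace 𝕜 E] [FiniteDimensional 𝕜 E] {T : E →ₗ[𝕜] E}
    (hT : T.IsPositive) (h : trace 𝕜 E T = 0) : T = 0 := by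
  set b := (stdOrthonormalBasis 𝕜 E).toBasis
  have hM := (posSemidef_toMatrix_iff (stdOrthonormalBasis 𝕜 E)).mpr hT
  rw [trace_eq_matrix_trace 𝕜 b] at h
  exact (toMatrix b b).map_eq_zero_iff.mp (hM.trace_eq_zero_iff.mp h)

theorem ContinuousLinearEquiv.trace_conjContinuousAlgEquiv {𝕜 V : Type*} [NormedField 𝕜]
    [NormedAddCommGroup V] [NormedSpace 𝕜 V] (U : V ≃L[𝕜] V) (T : V →L[𝕜] V) :
    LinearMap.trace 𝕜 V (U.conjContinuousAlgEquiv T).toLinearMap =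
      LinearMap.trace 𝕜 V T.toLinearMap :=
  LinearMap.trace_conj' T.toLinearMap U.toLinearEquiv

section Measure

variable {α : Type*} [MeasurableSpace α] {μ : Measure α}

theorem MeasurableEquiv.measurePreserving_of_measure_image_eq (e : α ≃ᵐ α)
    (h : ∀ A, MeasurableSet A → μ (e '' A) = μ A) : MeasurePreserving e μ μ := by
  refine ⟨e.measurable, Measure.ext fun A hA => ?_⟩
  rw [Measure.map_apply e.measurable hA, ← h _ (e.measurable hA), e.image_preimage]

theorem Complex.ae_nonneg_of_forall_setIntegral_nonneg {f : α → ℂ} (hf : Integrable f μ)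
    (h : ∀ s, MeasurableSet s → μ s < ⊤ → 0 ≤ ∫ x in s, f x ∂μ) : 0 ≤ᵐ[μ] f := by
  have hre : 0 ≤ᵐ[μ] fun x => RCLike.re (f x) :=
    MeasureTheory.ae_nonneg_of_forall_setIntegral_nonneg hf.re fun s hs hμs => by
      rw [integral_re hf.integrableOn]
      exact (Complex.nonneg_iff.mp (h s hs hμs)).1
  have him : (fun x => RCLike.im (f x)) =ᵐ[μ] 0 :=
    hf.im.ae_eq_zero_of_forall_setIntegral_eq_zero fun s hs hμs => by
      rw [integral_im hf.integrableOn]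
      exact (Complex.nonneg_iff.mp (h s hs hμs)).2.symm
  filter_upwards [hre, him] with x hxre hxim
  exact Complex.nonneg_iff.mpr ⟨hxre, hxim.symm⟩

theorem VectorMeasure.exists_integrable_forall_setIntegral_eq {W : Type*}
    [NormedAddCommGroup W] [NormedSpace ℝ W] [FiniteDimensional ℝ W] (F : VectorMeasure α W)
    (μ : Measure α) [IsFiniteMeasure μ] (hac : ∀ A, MeasurableSet A → μ A = 0 → F A = 0) :
    ∃ f : α → W, Integrable f μ ∧ ∀ A, MeasurableSet A → F A = ∫ x in A, f x ∂μ := by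
  let b := Module.finBasis ℝ W
  let s : Fin (Module.finrank ℝ W) → SignedMeasure α := fun i =>
    F.mapRange (b.coord i).toAddMonoidHom (b.coord i).continuous_of_finiteDimensional
  have hs_ac (i) : s i ≪ᵥ μ.toENNRealVectorMeasure :=
    .mk fun A hA h0 => by
      rw [Measure.toENNRealVectorMeasure_apply_measurable hA] at h0
      change b.coord i (F A) = 0
      rw [hac A hA h0, map_zero]
  have hint (i) : Integrable (fun x => (s i).rnDeriv μ x • b i) μ :=
    ((s i).integrable_rnDeriv μ).smul_const _
  refine ⟨fun x => ∑ i, (s i).rnDeriv μ x • b i, integrable_finsetSum _ fun i _ => hint i,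
    fun A hA => ?_⟩
  have hcoord (i) : ∫ x in A, (s i).rnDeriv μ x • b i ∂μ = b.coord i (F A) • b i := by
    rw [integral_smul_const, ← withDensityᵥ_apply ((s i).integrable_rnDeriv μ) hA,
      SignedMeasure.withDensityᵥ_rnDeriv_eq _ _ (hs_ac i)]
    rfl
  rw [integral_finsetSum _ fun i _ => (hint i).integrableOn]
  simp_rw [hcoord, Module.Basis.coord_apply]
  exact (b.sum_repr (F A)).symm

end Measure

section OperatorValuedMeasure

variable {α V : Type*} [MeasurableSpace α] [NormedAddCommGroup V] [InnerProductSpace ℂ V]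
  {F : VectorMeasure α (V →L[ℂ] V)} {μ : Measure α} {f : α → V →L[ℂ] V}

theorem measureReal_eq_trace (hF : ∀ A, MeasurableSet A → (F A).IsPositive)
    (hμ : ∀ A, MeasurableSet A → μ A = ENNReal.ofReal (LinearMap.trace ℂ V (F A).toLinearMap).re)
    {A : Set α} (hA : MeasurableSet A) :
    (μ.real A : ℂ) = LinearMap.trace ℂ V (F A).toLinearMap := by
  have hnonneg : 0 ≤ LinearMap.trace ℂ V (F A).toLinearMap := (hF A hA).toLinearMap.trace_nonneg
  rw [measureReal_def, hμ A hA, ENNReal.toReal_ofReal (Complex.nonneg_iff.mp hnonneg).1]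
  exact (Complex.eq_re_of_ofReal_le hnonneg).symm

theorem measure_image_eq_of_apply_image_eq_conj
    (hμ : ∀ A, MeasurableSet A → μ A = ENNReal.ofReal (LinearMap.trace ℂ V (F A).toLinearMap).re)
    (e : α ≃ᵐ α) (U : V ≃L[ℂ] V)
    (hFe : ∀ A, MeasurableSet A → F (e '' A) = U.conjContinuousAlgEquiv (F A))
    {A : Set α} (hA : MeasurableSet A) : μ (e '' A) = μ A := by
  rw [hμ _ (e.measurableSet_image.mpr hA), hμ A hA, hFe A hA, U.trace_conjContinuousAlgEquiv]

theorem ae_comp_eq_conj_of_setIntegral_eq [CompleteSpace V] (hf : Integrable f μ)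
    (hfF : ∀ A, MeasurableSet A → F A = ∫ x in A, f x ∂μ) (e : α ≃ᵐ α) (U : V ≃L[ℂ] V)
    (he : MeasurePreserving e μ μ)
    (hFe : ∀ A, MeasurableSet A → F (e '' A) = U.conjContinuousAlgEquiv (F A)) :
    ∀ᵐ x ∂μ, f (e x) = U.conjContinuousAlgEquiv (f x) := by
  let conjL := U.conjContinuousAlgEquiv.toContinuousLinearEquiv
  refine ((he.integrable_comp_emb e.measurableEmbedding).mpr hf).ae_eq_of_forall_setIntegral_eq
    _ _ (conjL.toContinuousLinearMap.integrable_comp hf) fun A hA _ => ?_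
  change ∫ x in A, f (e x) ∂μ = _
  rw [← he.setIntegral_image_emb e.measurableEmbedding f A,
    ← hfF _ (e.measurableSet_image.mpr hA), hFe A hA, hfF A hA]
  exact (conjL.integral_comp_comm f).symm

variable [FiniteDimensional ℂ V]

theorem apply_eq_zero_of_measure_eq_zero (hF : ∀ A, MeasurableSet A → (F A).IsPositive)
    (hμ : ∀ A, MeasurableSet A → μ A = ENNReal.ofReal (LinearMap.trace ℂ V (F A).toLinearMap).re)
    {A : Set α} (hA : MeasurableSet A) (h0 : μ A = 0) : F A = 0 := by
  have htr := measureReal_eq_trace hF hμ hA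
  rw [measureReal_def, h0, ENNReal.toReal_zero, Complex.ofReal_zero] at htr
  exact ContinuousLinearMap.coe_injective ((hF A hA).toLinearMap.eq_zero_of_trace_eq_zero htr.symm)

theorem ae_isPositive_of_forall_setIntegral_isPositive (hf : Integrable f μ)
    (h : ∀ A, MeasurableSet A → (∫ x in A, f x ∂μ).IsPositive) :
    ∀ᵐ x ∂μ, (f x).IsPositive := by
  have hpair (v : V) : ∀ᵐ x ∂μ, 0 ≤ inner ℂ v (f x v) := by
    let ℓ := (innerSL ℂ v).comp (ContinuousLinearMap.apply ℂ V v)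
    refine Complex.ae_nonneg_of_forall_setIntegral_nonneg (ℓ.integrable_comp hf)
      fun A hA _ => ?_
    change 0 ≤ ∫ x in A, ℓ (f x) ∂μ
    rw [ℓ.integral_comp_comm hf.integrableOn]
    exact (h A hA).inner_nonneg_right v
  obtain ⟨D, hDc, hDd⟩ := TopologicalSpace.exists_countable_dense V
  filter_upwards [(ae_ball_iff hDc).mpr fun v _ => hpair v] with x hx
  refine (ContinuousLinearMap.isPositive_iff_forall_inner_nonneg _).mpr fun v => ?_
  have hclosed : IsClosed {v : V | 0 ≤ inner ℂ v (f x v)} :=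
    isClosed_le continuous_const (continuous_id.inner (f x).continuous)
  exact hclosed.closure_subset_iff.mpr hx (hDd.closure_eq ▸ Set.mem_univ v)

theorem ae_trace_eq_one [IsFiniteMeasure μ] (hf : Integrable f μ)
    (hfF : ∀ A, MeasurableSet A → F A = ∫ x in A, f x ∂μ)
    (htr : ∀ A, MeasurableSet A → (μ.real A : ℂ) = LinearMap.trace ℂ V (F A).toLinearMap) :
    ∀ᵐ x ∂μ, LinearMap.trace ℂ V (f x).toLinearMap = 1 := by
  let trL : (V →L[ℂ] V) →L[ℂ] ℂ :=
    (LinearMap.trace ℂ V ∘ₗ ContinuousLinearMap.coeLM ℂ).toContinuousLinearMap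
  refine (trL.integrable_comp hf).ae_eq_of_forall_setIntegral_eq _ _ (integrable_const 1)
    fun A hA _ => ?_
  rw [trL.integral_comp_comm hf.integrableOn, ← hfF A hA, setIntegral_const, Complex.real_smul,
    mul_one]
  exact (htr A hA).symm

end OperatorValuedMeasure

/-- for a `G`-equivariant operator-valued spectral measure `F`
(`F(gA) = θ(g) F(A) θ(g)⁻¹`) on ℝᵈ with trace measure `μ(A) = tr F(A)`: `μ` is
`G`-invariant, `F ≪ μ`, and the Radon–Nikodym density `f = dF/dμ` takes values in the
convex compact set of Hermitian nonnegative-definite operators with unit trace and is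
`G`-equivariant `μ`-a.e. -/
theorem stmt_17 {d : ℕ} {V : Type*} [NormedAddCommGroup V] [InnerProductSpace ℂ V]
    [FiniteDimensional ℂ V] {G : Type*} [Group G]
    (ρ : G →* (EuclideanSpace ℝ (Fin d) ≃ₗᵢ[ℝ] EuclideanSpace ℝ (Fin d)))
    (θ : G →* (V ≃ₗᵢ[ℂ] V))
    (F : VectorMeasure (EuclideanSpace ℝ (Fin d)) (V →L[ℂ] V))
    (μ : Measure (EuclideanSpace ℝ (Fin d))) [IsFiniteMeasure μ]
    (hherm : ∀ A : Set (EuclideanSpace ℝ (Fin d)), MeasurableSet A → ∀ u v : V,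
      (inner ℂ u ((F A) v) : ℂ) = starRingEnd ℂ (inner ℂ v ((F A) u)))
    (hpos : ∀ A : Set (EuclideanSpace ℝ (Fin d)), MeasurableSet A → ∀ v : V,
      0 ≤ (inner ℂ v ((F A) v) : ℂ).re)
    (hμ : ∀ A : Set (EuclideanSpace ℝ (Fin d)), MeasurableSet A →
      μ A = ENNReal.ofReal ((LinearMap.trace ℂ V (F A).toLinearMap).re))
    (hequiv : ∀ (g : G) (A : Set (EuclideanSpace ℝ (Fin d))), MeasurableSet A →
      ∀ v : V, (F ((ρ g) '' A)) v = θ g ((F A) (θ g⁻¹ v))) :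
    (∀ (g : G) (A : Set (EuclideanSpace ℝ (Fin d))), MeasurableSet A →
      μ ((ρ g) '' A) = μ A) ∧
    (∀ A : Set (EuclideanSpace ℝ (Fin d)), MeasurableSet A → μ A = 0 → F A = 0) ∧
    (∃ f : EuclideanSpace ℝ (Fin d) → (V →L[ℂ] V),
      (∀ A : Set (EuclideanSpace ℝ (Fin d)), MeasurableSet A →
        F A = ∫ k in A, f k ∂μ) ∧
      (∀ᵐ k ∂μ, (∀ u v : V, (inner ℂ u ((f k) v) : ℂ) = starRingEnd ℂ (inner ℂ v ((f k) u))) ∧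
        (∀ v : V, 0 ≤ (inner ℂ v ((f k) v) : ℂ).re) ∧
        LinearMap.trace ℂ V (f k).toLinearMap = 1) ∧
      (∀ g : G, ∀ᵐ k ∂μ, ∀ v : V, (f (ρ g k)) v = θ g ((f k) (θ g⁻¹ v)))) := by
  have hF : ∀ A, MeasurableSet A → (F A).IsPositive := fun A hA =>
    (ContinuousLinearMap.isPositive_iff_inner_eq_conj_and_re_inner_nonneg _).mpr
      ⟨hherm A hA, hpos A hA⟩
  let e (g : G) : EuclideanSpace ℝ (Fin d) ≃ᵐ EuclideanSpace ℝ (Fin d) :=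
    (ρ g).toHomeomorph.toMeasurableEquiv
  let U (g : G) : V ≃L[ℂ] V := (θ g).toContinuousLinearEquiv
  have hFe (g : G) : ∀ A, MeasurableSet A → F (e g '' A) = (U g).conjContinuousAlgEquiv (F A) :=
    fun A hA => ContinuousLinearMap.ext fun v => by
      rw [show (e g : _ → _) = ρ g from rfl, hequiv g A hA v, map_inv, LinearIsometryEquiv.coe_inv]
      rfl
  have hinv (g : G) A (hA : MeasurableSet A) : μ (ρ g '' A) = μ A :=
    measure_image_eq_of_apply_image_eq_conj hμ (e g) (U g) (hFe g) hA
  have hac : ∀ A, MeasurableSet A → μ A = 0 → F A = 0 := fun _ hA =>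
    apply_eq_zero_of_measure_eq_zero hF hμ hA
  obtain ⟨f, hf, hfF⟩ := VectorMeasure.exists_integrable_forall_setIntegral_eq F μ hac
  refine ⟨hinv, hac, f, hfF, ?_, fun g => ?_⟩
  · have hfpos := ae_isPositive_of_forall_setIntegral_isPositive hf fun A hA => hfF A hA ▸ hF A hA
    have hftr := ae_trace_eq_one hf hfF fun A hA => measureReal_eq_trace hF hμ hA
    filter_upwards [hfpos, hftr] with k hk hk1
    obtain ⟨hsymm, hnonneg⟩ :=
      (ContinuousLinearMap.isPositive_iff_inner_eq_conj_and_re_inner_nonneg _).mp hk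
    exact ⟨hsymm, hnonneg, hk1⟩
  · have he := (e g).measurePreserving_of_measure_image_eq (hinv g)
    filter_upwards [ae_comp_eq_conj_of_setIntegral_eq hf hfF (e g) (U g) he (hFe g)] with k hk v
    rw [show ρ g k = e g k from rfl, hk, map_inv, LinearIsometryEquiv.coe_inv]
    rfl
end
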